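/- If P, Q ∈ ℤ³ are vertices of an equilateral triangle O, P, Q with O the origin, then the squared side length ‖P‖² is an even integer. -/

import Mathlib

/-! Expanding `‖P - Q‖² = ‖P‖² - 2⟪P, Q⟫ + ‖Q‖²` with all three sides equal gives
`‖P‖² = 2⟪P, Q⟫`, and for integer points the inner product `⟪P, Q⟫` is an integer. -/

/-- Casting a vector of integers to a point of `ℝ³` (with the Euclidean structure). -/
noncomputable def intVec (v : Fin 3 → ℤ) : EuclideanSpace ℝ (Fin 3) :=
  (WithLp.equiv 2 (Fin 3 → ℝ)).symm fun i => (v i : ℝ)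

open Matrix

theorem norm_sq_eq_two_mul_inner_of_norm_eq_of_norm_eq_norm_sub
    {E : Type*} [NormedAddCommGroup E] [InnerProductSpace ℝ E] {x y : E}
    (hxy : ‖x‖ = ‖y‖) (hy : ‖y‖ = ‖x - y‖) :
    ‖x‖ ^ 2 = 2 * inner ℝ x y := by
  have h := norm_sub_sq_real x y
  rw [← hy, ← hxy] at h
  linarith

theorem inner_intVec (v w : Fin 3 → ℤ) :
    inner ℝ (intVec v) (intVec w) = ((v ⬝ᵥ w : ℤ) : ℝ) := by
  simp [intVec, PiLp.inner_apply, dotProduct, mul_comm]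

theorem norm_intVec_sq (v : Fin 3 → ℤ) : ‖intVec v‖ ^ 2 = ((v ⬝ᵥ v : ℤ) : ℝ) := by
  rw [← real_inner_self_eq_norm_sq, inner_intVec]

theorem sq_side_even_of_integer_equilateral_triangle_general
    (P Q : Fin 3 → ℤ)
    (h1 : ‖intVec P‖ = ‖intVec Q‖)
    (h2 : ‖intVec Q‖ = ‖intVec P - intVec Q‖) :
    Even (P 0 ^ 2 + P 1 ^ 2 + P 2 ^ 2) := by
  have key := norm_sq_eq_two_mul_inner_of_norm_eq_of_norm_eq_norm_sub h1 h2
  rw [norm_intVec_sq, inner_intVec] at key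
  have hdot : P ⬝ᵥ P = 2 * (P ⬝ᵥ Q) := by exact_mod_cast key
  have hsum : P 0 ^ 2 + P 1 ^ 2 + P 2 ^ 2 = P ⬝ᵥ P := by
    simp only [dotProduct, Fin.sum_univ_three, sq]
  rw [hsum, hdot]
  exact even_two_mul _

/-- If `O = 0, P, Q` are the vertices of an equilateral triangle with `P, Q ∈ ℤ³`, then the
squared side length `‖P‖² = P₀² + P₁² + P₂²` is even. -/
theorem sq_side_even_of_integer_equilateral_triangle
    (P Q : Fin 3 → ℤ) (hP : P ≠ 0) (hQ : Q ≠ 0) (hPQ : P ≠ Q)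
    (h1 : ‖intVec P‖ = ‖intVec Q‖)
    (h2 : ‖intVec Q‖ = ‖intVec P - intVec Q‖) :
    Even (P 0 ^ 2 + P 1 ^ 2 + P 2 ^ 2) :=
  sq_side_even_of_integer_equilateral_triangle_general P Q h1 h2
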